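/- arXiv:1412.7758 — 3 statements merged into one kernel-verified Lean document; each statement's English description precedes it below -/
import Mathlib

section
/- Let f : V₁ → V₂ be a linear map between finite-dimensional real inner product spaces and let det'(f) denote the product of the nonzero singular values of f (with det'(f) = 1 if f = 0). Then det'(f) ≤ ‖f‖^(rank f), with the convention 0^0 = 1. -/
/-!
The nonzero singular values of `f` are exactly the first `rank f` entries of Mathlib's
`LinearMap.singularValues`, so `det' f` is their product. Each singular value is `‖f v‖` for a
unit eigenvector `v` of `f* ∘ f`, hence at most `‖f‖`.
-/

open Module

/-- The geometric determinant `det'(f)`: the product of the nonzero singular values of `f`,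
where a singular value is a nonnegative real `x` with `x²` an eigenvalue of `f* ∘ f`
(counted with multiplicity); by convention `det'(f) = 1` if `f = 0`. -/
noncomputable def detp {𝕜 E F : Type*} [RCLike 𝕜] [NormedAddCommGroup E] [InnerProductSpace 𝕜 E]
    [NormedAddCommGroup F] [InnerProductSpace 𝕜 F] [FiniteDimensional 𝕜 E] [FiniteDimensional 𝕜 F]
    (f : E →ₗ[𝕜] F) : ℝ :=
  have hT : (LinearMap.adjoint f ∘ₗ f).IsSymmetric := fun x y => by
    simp only [LinearMap.comp_apply, LinearMap.adjoint_inner_left, LinearMap.adjoint_inner_right]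
  ∏ i : Fin (finrank 𝕜 E),
    if hT.eigenvalues rfl i = 0 then 1 else Real.sqrt (hT.eigenvalues rfl i)

namespace LinearMap

variable {𝕜 E F : Type*} [RCLike 𝕜] [NormedAddCommGroup E] [InnerProductSpace 𝕜 E]
  [NormedAddCommGroup F] [InnerProductSpace 𝕜 F] [FiniteDimensional 𝕜 E] [FiniteDimensional 𝕜 F]
  (f : E →ₗ[𝕜] F)

theorem singularValues_fin_eq_norm_apply_eigenvectorBasis {n : ℕ} (hn : finrank 𝕜 E = n)
    (i : Fin n) :
    f.singularValues i = ‖f (f.isSymmetric_adjoint_comp_self.eigenvectorBasis hn i)‖ := by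
  set b := f.isSymmetric_adjoint_comp_self.eigenvectorBasis hn
  have hb : ‖b i‖ = 1 := b.orthonormal.1 i
  have h_eig : (f.isSymmetric_adjoint_comp_self.eigenvalues hn i : 𝕜) = ‖f (b i)‖ ^ 2 := by
    calc (f.isSymmetric_adjoint_comp_self.eigenvalues hn i : 𝕜)
        = inner 𝕜 (b i) ((adjoint f ∘ₗ f) (b i)) := by
          rw [inner_product_apply_eigenvector
            (f.isSymmetric_adjoint_comp_self.apply_eigenvectorBasis hn i), hb]
          simp
      _ = ‖f (b i)‖ ^ 2 := by
          rw [comp_apply, adjoint_inner_right, inner_self_eq_norm_sq_to_K]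
  rw [← sq_eq_sq₀ (f.singularValues_nonneg i) (norm_nonneg _), f.sq_singularValues_fin hn]
  exact_mod_cast h_eig

theorem singularValues_le_opNorm (i : ℕ) : f.singularValues i ≤ ‖f.toContinuousLinearMap‖ := by
  rcases lt_or_ge i (finrank 𝕜 E) with hi | hi
  · set b := f.isSymmetric_adjoint_comp_self.eigenvectorBasis rfl
    calc f.singularValues i = ‖f (b ⟨i, hi⟩)‖ :=
          f.singularValues_fin_eq_norm_apply_eigenvectorBasis rfl ⟨i, hi⟩
      _ ≤ ‖f.toContinuousLinearMap‖ * ‖b ⟨i, hi⟩‖ := f.toContinuousLinearMap.le_opNorm _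
      _ = ‖f.toContinuousLinearMap‖ := by rw [b.orthonormal.1, mul_one]
  · rw [f.singularValues_of_finrank_le hi]
    exact norm_nonneg _

theorem detp_eq_prod_singularValues :
    detp f = ∏ i ∈ Finset.range (finrank 𝕜 f.range), f.singularValues i := by
  have h_ite : detp f = ∏ i ∈ Finset.range (finrank 𝕜 E),
      if f.singularValues i = 0 then 1 else f.singularValues i := by
    rw [detp, ← Fin.prod_univ_eq_prod_range]
    refine Finset.prod_congr rfl fun i _ => ?_
    simp only [f.singularValues_fin rfl i,
      Real.sqrt_eq_zero (f.isPositive_adjoint_comp_self.nonneg_eigenvalues rfl i)]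
  rw [h_ite]
  refine (Finset.prod_subset_one_on_sdiff (Finset.range_subset_range.mpr
    f.finrank_range_le) (fun i hi => ?_) (fun i hi => ?_)).symm
  · have : finrank 𝕜 f.range ≤ i := by simpa using (Finset.mem_sdiff.mp hi).2
    rw [if_pos (f.singularValues_eq_zero_iff_le_finrank_range.mpr this)]
  · rw [if_neg (f.singularValues_pos_iff_lt_finrank_range.mpr (Finset.mem_range.mp hi)).ne']

theorem detp_le_opNorm_pow :
    detp f ≤ ‖f.toContinuousLinearMap‖ ^ finrank 𝕜 f.range := by
  rw [detp_eq_prod_singularValues]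
  refine (Finset.prod_le_prod (fun i _ => f.singularValues_nonneg i)
    (fun i _ => f.singularValues_le_opNorm i)).trans_eq ?_
  rw [Finset.prod_const, Finset.card_range]

end LinearMap

theorem stmt0 {V₁ V₂ : Type*} [NormedAddCommGroup V₁] [InnerProductSpace ℝ V₁]
    [NormedAddCommGroup V₂] [InnerProductSpace ℝ V₂]
    [FiniteDimensional ℝ V₁] [FiniteDimensional ℝ V₂] (f : V₁ →ₗ[ℝ] V₂) :
    detp f ≤ ‖LinearMap.toContinuousLinearMap f‖ ^ (finrank ℝ (LinearMap.range f)) :=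
  f.detp_le_opNorm_pow
end

section
/- For linear maps f₁ : V₁ → W₁ and f₂ : V₂ → W₂ between finite-dimensional inner product spaces, the geometric determinant of the direct sum satisfies det'(f₁ ⊕ f₂) = det'(f₁) · det'(f₂). -/
open Module

/-- The block-diagonal direct sum `f₁ ⊕ f₂`, as a map between the `L²` direct sums. -/
noncomputable def dirSum {V₁ V₂ W₁ W₂ : Type*}
    [NormedAddCommGroup V₁] [InnerProductSpace ℝ V₁] [NormedAddCommGroup V₂]
    [InnerProductSpace ℝ V₂] [NormedAddCommGroup W₁] [InnerProductSpace ℝ W₁]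
    [NormedAddCommGroup W₂] [InnerProductSpace ℝ W₂]
    (f₁ : V₁ →ₗ[ℝ] W₁) (f₂ : V₂ →ₗ[ℝ] W₂) :
    WithLp 2 (V₁ × V₂) →ₗ[ℝ] WithLp 2 (W₁ × W₂) :=
  (WithLp.linearEquiv 2 ℝ (W₁ × W₂)).symm.toLinearMap ∘ₗ (f₁.prodMap f₂) ∘ₗ
    (WithLp.linearEquiv 2 ℝ (V₁ × V₂)).toLinearMap

open Polynomial in
lemma my_charpoly_diagonal {n : Type*} [DecidableEq n] [Fintype n] (d : n → ℝ) :
    (Matrix.diagonal d).charpoly = ∏ i, (X - C (d i)) := by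
  have h : Matrix.charmatrix (Matrix.diagonal d) = Matrix.diagonal fun i => X - C (d i) := by
    ext i j
    by_cases h : i = j
    · subst h; simp [Matrix.charmatrix_apply_eq]
    · simp [Matrix.charmatrix_apply_ne _ _ _ h, Matrix.diagonal_apply_ne _ h]
  rw [Matrix.charpoly, h, Matrix.det_diagonal]

open Polynomial in
lemma my_charpoly_symm {E : Type*} [NormedAddCommGroup E] [InnerProductSpace ℝ E]
    [FiniteDimensional ℝ E] {T : E →ₗ[ℝ] E} (hT : T.IsSymmetric) :
    T.charpoly = ∏ i : Fin (finrank ℝ E), (X - C (hT.eigenvalues rfl i)) := by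
  classical
  rw [← LinearMap.charpoly_toMatrix T (hT.eigenvectorBasis rfl).toBasis]
  have h : LinearMap.toMatrix (hT.eigenvectorBasis rfl).toBasis (hT.eigenvectorBasis rfl).toBasis T
      = Matrix.diagonal (hT.eigenvalues rfl) := by
    ext i j
    rw [LinearMap.toMatrix_apply]
    simp only [OrthonormalBasis.coe_toBasis, hT.apply_eigenvectorBasis rfl j]
    rw [map_smul, ← OrthonormalBasis.coe_toBasis, Basis.repr_self]
    by_cases h : i = j
    · subst h; simp
    · simp [Matrix.diagonal_apply_ne _ h, Finsupp.single_apply, Ne.symm h]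
  rw [h, my_charpoly_diagonal]

open Polynomial in
lemma detp_eq_roots {E F : Type*} [NormedAddCommGroup E] [InnerProductSpace ℝ E]
    [NormedAddCommGroup F] [InnerProductSpace ℝ F] [FiniteDimensional ℝ E]
    [FiniteDimensional ℝ F] (f : E →ₗ[ℝ] F) :
    detp f = (((LinearMap.adjoint f ∘ₗ f).charpoly.roots).map
      (fun x => if x = 0 then 1 else Real.sqrt x)).prod := by
  have hT : (LinearMap.adjoint f ∘ₗ f).IsSymmetric := fun x y => by
    simp only [LinearMap.comp_apply, LinearMap.adjoint_inner_left, LinearMap.adjoint_inner_right]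
  have h1 : (LinearMap.adjoint f ∘ₗ f).charpoly
      = ((Finset.univ.val.map (hT.eigenvalues rfl)).map fun a => X - C a).prod := by
    rw [my_charpoly_symm hT, Multiset.map_map, Finset.prod]
    rfl
  rw [h1, Polynomial.roots_multiset_prod_X_sub_C, Multiset.map_map]
  rw [detp, Finset.prod]
  rfl

lemma adjoint_dirSum {V₁ V₂ W₁ W₂ : Type*}
    [NormedAddCommGroup V₁] [InnerProductSpace ℝ V₁] [NormedAddCommGroup V₂]
    [InnerProductSpace ℝ V₂] [NormedAddCommGroup W₁] [InnerProductSpace ℝ W₁]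
    [NormedAddCommGroup W₂] [InnerProductSpace ℝ W₂]
    [FiniteDimensional ℝ V₁] [FiniteDimensional ℝ V₂]
    [FiniteDimensional ℝ W₁] [FiniteDimensional ℝ W₂]
    (f₁ : V₁ →ₗ[ℝ] W₁) (f₂ : V₂ →ₗ[ℝ] W₂) :
    dirSum (LinearMap.adjoint f₁) (LinearMap.adjoint f₂) = LinearMap.adjoint (dirSum f₁ f₂) := by
  rw [LinearMap.eq_adjoint_iff]
  intro x y
  simp [dirSum, WithLp.prod_inner_apply, LinearMap.adjoint_inner_left]

lemma dirSum_comp {V₁ V₂ W₁ W₂ U₁ U₂ : Type*}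
    [NormedAddCommGroup V₁] [InnerProductSpace ℝ V₁] [NormedAddCommGroup V₂]
    [InnerProductSpace ℝ V₂] [NormedAddCommGroup W₁] [InnerProductSpace ℝ W₁]
    [NormedAddCommGroup W₂] [InnerProductSpace ℝ W₂]
    [NormedAddCommGroup U₁] [InnerProductSpace ℝ U₁] [NormedAddCommGroup U₂]
    [InnerProductSpace ℝ U₂]
    (f₁ : V₁ →ₗ[ℝ] W₁) (f₂ : V₂ →ₗ[ℝ] W₂) (g₁ : W₁ →ₗ[ℝ] U₁) (g₂ : W₂ →ₗ[ℝ] U₂) :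
    dirSum g₁ g₂ ∘ₗ dirSum f₁ f₂ = dirSum (g₁ ∘ₗ f₁) (g₂ ∘ₗ f₂) := by
  ext x; rfl

open Polynomial in
theorem stmt1 {V₁ V₂ W₁ W₂ : Type*}
    [NormedAddCommGroup V₁] [InnerProductSpace ℝ V₁] [NormedAddCommGroup V₂]
    [InnerProductSpace ℝ V₂] [NormedAddCommGroup W₁] [InnerProductSpace ℝ W₁]
    [NormedAddCommGroup W₂] [InnerProductSpace ℝ W₂]
    [FiniteDimensional ℝ V₁] [FiniteDimensional ℝ V₂]
    [FiniteDimensional ℝ W₁] [FiniteDimensional ℝ W₂]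
    (f₁ : V₁ →ₗ[ℝ] W₁) (f₂ : V₂ →ₗ[ℝ] W₂) :
    detp (dirSum f₁ f₂) = detp f₁ * detp f₂ := by
  set T₁ := LinearMap.adjoint f₁ ∘ₗ f₁
  set T₂ := LinearMap.adjoint f₂ ∘ₗ f₂
  have hcomp : LinearMap.adjoint (dirSum f₁ f₂) ∘ₗ dirSum f₁ f₂ = dirSum T₁ T₂ := by
    rw [← adjoint_dirSum, dirSum_comp]
  have hconj : dirSum T₁ T₂ =
      (WithLp.linearEquiv 2 ℝ (V₁ × V₂)).symm.conj (T₁.prodMap T₂) := by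
    rfl
  have hcp : (dirSum T₁ T₂).charpoly = T₁.charpoly * T₂.charpoly := by
    rw [hconj, LinearEquiv.charpoly_conj, LinearMap.charpoly_prodMap]
  have h1 : T₁.charpoly ≠ 0 := (LinearMap.charpoly_monic T₁).ne_zero
  have h2 : T₂.charpoly ≠ 0 := (LinearMap.charpoly_monic T₂).ne_zero
  rw [detp_eq_roots, detp_eq_roots, detp_eq_roots, hcomp, hcp,
    Polynomial.roots_mul (mul_ne_zero h1 h2), Multiset.map_add, Multiset.prod_add]
end

section
/- Let (F_k) be a sequence of density functions in the determinantal class, let F(λ) = liminf_k F_k(λ), and let F⁺ be F made right-continuous, i.e. F⁺(λ) = lim_{ε→0⁺} F(λ+ε). Assume F⁺ is in the determinantal class, that there is a constant C with F_k(λ) = F_l(λ) for all k, l ≥ 1 and λ > C, and that lim_k F_k(0) = F⁺(0). Then limsup_{k→∞} det(F_k) ≤ det(F⁺). -/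
/-!
Fix `b ≥ 0` with `b > C`. Splitting `∫_{(0,∞)} log dF` at `b` and applying Tonelli to
`log b - log x = ∫_x^b dt / t` on `(0, b]` gives
`ln det F = (F b - F 0) log b + ∫_{(b,∞)} log dF - ∫_0^b (F t - F 0) / t dt`.
All the `F k` and `F⁺` agree beyond `C`, so the first two terms for `F k` converge to those for
`F⁺` because `F k 0 → F⁺ 0`. Off the countably many discontinuities of the monotone function
`liminf_k F_k` on `[0, ∞)`, `F⁺` coincides with it, so Fatou's lemma bounds the last integral for
`F⁺` by the `liminf` of those for the `F k`.
-/

open MeasureTheory Filter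
open scoped Classical

/-- The determinant of a density function `F`: `exp (∫_{0⁺}^∞ ln λ dF)` when the
Lebesgue–Stieltjes integral exists as a real number (the determinantal class), and `0`
otherwise. -/
noncomputable def detF (F : StieltjesFunction ℝ) : ℝ :=
  if IntegrableOn Real.log (Set.Ioi 0) F.measure then
    Real.exp (∫ x in Set.Ioi 0, Real.log x ∂F.measure)
  else 0

open Set Function
open scoped ENNReal Topology

theorem lintegral_Icc_ofReal_inv {x b : ℝ} (hx : 0 < x) (hxb : x ≤ b) :
    ∫⁻ t in Icc x b, ENNReal.ofReal t⁻¹ = ENNReal.ofReal (Real.log b - Real.log x) := by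
  have hinv : IntegrableOn (fun t : ℝ => t⁻¹) (Ioc x b) :=
    (intervalIntegrable_iff_integrableOn_Ioc_of_le hxb).1 <|
      intervalIntegral.intervalIntegrable_inv (fun t ht => (hx.trans_le (by
        simpa [hxb] using ht.1)).ne') continuousOn_id
  have hinv_nonneg : 0 ≤ᵐ[volume.restrict (Ioc x b)] fun t : ℝ => t⁻¹ :=
    (ae_restrict_iff' measurableSet_Ioc).2 (ae_of_all _ fun t ht => (inv_pos.2 (hx.trans ht.1)).le)
  rw [← setLIntegral_congr Ioc_ae_eq_Icc, ← ofReal_integral_eq_lintegral_ofReal hinv hinv_nonneg,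
    ← intervalIntegral.integral_of_le hxb, integral_inv_of_pos hx (hx.trans_le hxb),
    Real.log_div (hx.trans_le hxb).ne' hx.ne']

theorem lintegral_Ioc_lintegral_Icc_eq (μ ν : Measure ℝ) [SFinite μ] [SFinite ν]
    {g : ℝ → ℝ≥0∞} (hg : Measurable g) (a b : ℝ) :
    ∫⁻ x in Ioc a b, ∫⁻ t in Icc x b, g t ∂ν ∂μ = ∫⁻ t in Ioc a b, μ (Ioc a t) * g t ∂ν := by
  set T : Set (ℝ × ℝ) := {p | a < p.1 ∧ p.1 ≤ p.2 ∧ p.2 ≤ b}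
  have hT : MeasurableSet T :=
    (measurableSet_lt measurable_const measurable_fst).inter
      ((measurableSet_le measurable_fst measurable_snd).inter
        (measurableSet_le measurable_snd measurable_const))
  have h_fst (x : ℝ) : ∫⁻ t, T.indicator (fun p => g p.2) (x, t) ∂ν
      = (Ioc a b).indicator (fun x => ∫⁻ t in Icc x b, g t ∂ν) x := by
    by_cases hx : x ∈ Ioc a b
    · rw [indicator_of_mem hx, ← lintegral_indicator measurableSet_Icc]
      congr 1 with t
      simp [T, indicator, hx.1]
    · rw [indicator_of_notMem hx]
      refine lintegral_eq_zero_of_ae_eq_zero (ae_of_all _ fun t => ?_)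
      simp only [T, indicator, mem_ofPred_eq, mem_Ioc, Pi.zero_apply] at hx ⊢
      split_ifs <;> grind
  have h_snd (t : ℝ) : ∫⁻ x, T.indicator (fun p => g p.2) (x, t) ∂μ
      = (Ioc a b).indicator (fun t => μ (Ioc a t) * g t) t := by
    by_cases ht : t ∈ Ioc a b
    · rw [indicator_of_mem ht, mul_comm, ← lintegral_indicator_const measurableSet_Ioc]
      congr 1 with x
      simp only [T, indicator, mem_ofPred_eq, mem_Ioc] at ht ⊢
      split_ifs <;> grind
    · rw [indicator_of_notMem ht]
      refine lintegral_eq_zero_of_ae_eq_zero (ae_of_all _ fun x => ?_)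
      simp only [T, indicator, mem_ofPred_eq, mem_Ioc, Pi.zero_apply] at ht ⊢
      split_ifs <;> grind
  calc ∫⁻ x in Ioc a b, ∫⁻ t in Icc x b, g t ∂ν ∂μ
      = ∫⁻ x, ∫⁻ t, T.indicator (fun p => g p.2) (x, t) ∂ν ∂μ := by
        simp_rw [h_fst, lintegral_indicator measurableSet_Ioc]
    _ = ∫⁻ t, ∫⁻ x, T.indicator (fun p => g p.2) (x, t) ∂μ ∂ν :=
        lintegral_lintegral_swap ((hg.comp measurable_snd).indicator hT).aemeasurable
    _ = ∫⁻ t in Ioc a b, μ (Ioc a t) * g t ∂ν := by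
        simp_rw [h_snd, lintegral_indicator measurableSet_Ioc]

namespace StieltjesFunction

noncomputable def growthIntegral (f : StieltjesFunction ℝ) (b : ℝ) : ℝ≥0∞ :=
  ∫⁻ t in Ioc 0 b, ENNReal.ofReal ((f t - f 0) / t)

theorem measure_restrict_Ioi_eq {f g : StieltjesFunction ℝ} {c : ℝ}
    (h : ∀ x, c < x → f x = g x) : f.measure.restrict (Ioi c) = g.measure.restrict (Ioi c) := by
  have h' : ∀ x, c ≤ x → f x = g x := by
    intro x hx
    rcases hx.eq_or_lt with rfl | hx
    · rw [← g.rightLim_eq]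
      exact (rightLim_eq_of_tendsto (((f.right_continuous c).mono Ioi_subset_Ici_self).congr'
        (eventually_nhdsWithin_of_forall h))).symm
    · exact h x hx
  refine Measure.ext_of_Ioc _ _ fun a b _ => ?_
  rw [Measure.restrict_apply measurableSet_Ioc, Measure.restrict_apply measurableSet_Ioc,
    Ioc_inter_Ioi]
  rcases le_or_gt b c with hbc | hcb
  · rw [Ioc_eq_empty (by simpa using fun _ => hbc), measure_empty, measure_empty]
  · rw [measure_Ioc, measure_Ioc, h b hcb, h' _ le_sup_right]

theorem growthIntegral_eq_lintegral (f : StieltjesFunction ℝ) (b : ℝ) :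
    f.growthIntegral b = ∫⁻ x in Ioc 0 b, ENNReal.ofReal (Real.log b - Real.log x) ∂f.measure := by
  rw [← setLIntegral_congr_fun measurableSet_Ioc fun x hx => lintegral_Icc_ofReal_inv hx.1 hx.2,
    lintegral_Ioc_lintegral_Icc_eq _ _ (g := fun t => ENNReal.ofReal t⁻¹)
      (ENNReal.measurable_ofReal.comp measurable_inv)]
  refine setLIntegral_congr_fun measurableSet_Ioc fun t ht => ?_
  rw [measure_Ioc, ← ENNReal.ofReal_mul (sub_nonneg.2 (f.mono ht.1.le)), div_eq_mul_inv]

variable {f : StieltjesFunction ℝ} {b : ℝ}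

theorem growthIntegral_eq_ofReal_integral (hf : IntegrableOn Real.log (Ioc 0 b) f.measure) :
    f.growthIntegral b
      = ENNReal.ofReal (∫ x in Ioc 0 b, (Real.log b - Real.log x) ∂f.measure) := by
  rw [growthIntegral_eq_lintegral, ofReal_integral_eq_lintegral_ofReal]
  · exact (integrableOn_const measure_Ioc_lt_top.ne).sub hf
  · exact (ae_restrict_iff' measurableSet_Ioc).2 (ae_of_all _ fun x hx =>
      sub_nonneg.2 (Real.log_le_log hx.1 hx.2))

theorem growthIntegral_ne_top (hf : IntegrableOn Real.log (Ioc 0 b) f.measure) :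
    f.growthIntegral b ≠ ∞ := by
  rw [growthIntegral_eq_ofReal_integral hf]
  exact ENNReal.ofReal_ne_top

theorem integral_log_Ioc_eq (hf : IntegrableOn Real.log (Ioc 0 b) f.measure) (hb : 0 ≤ b) :
    ∫ x in Ioc 0 b, Real.log x ∂f.measure
      = (f b - f 0) * Real.log b - (f.growthIntegral b).toReal := by
  have hnonneg : 0 ≤ ∫ x in Ioc 0 b, (Real.log b - Real.log x) ∂f.measure :=
    setIntegral_nonneg measurableSet_Ioc fun x hx => sub_nonneg.2 (Real.log_le_log hx.1 hx.2)
  have hconst : IntegrableOn (fun _ => Real.log b) (Ioc 0 b) f.measure :=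
    integrableOn_const measure_Ioc_lt_top.ne
  rw [growthIntegral_eq_ofReal_integral hf, ENNReal.toReal_ofReal hnonneg,
    integral_sub hconst hf, setIntegral_const, smul_eq_mul,
    measureReal_def, measure_Ioc, ENNReal.toReal_ofReal (sub_nonneg.2 (f.mono hb))]
  ring

end StieltjesFunction

theorem detF_eq {f : StieltjesFunction ℝ} (hf : IntegrableOn Real.log (Ioi 0) f.measure) {b : ℝ}
    (hb : 0 ≤ b) :
    detF f = Real.exp ((f b - f 0) * Real.log b + ∫ x in Ioi b, Real.log x ∂f.measure
      - (f.growthIntegral b).toReal) := by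
  rw [detF, if_pos hf, ← Ioc_union_Ioi_eq_Ioi hb, setIntegral_union (Ioc_disjoint_Ioi le_rfl)
    measurableSet_Ioi (hf.mono_set Ioc_subset_Ioi_self) (hf.mono_set (Ioi_subset_Ioi hb)),
    f.integral_log_Ioc_eq (hf.mono_set Ioc_subset_Ioi_self) hb]
  ring_nf

theorem MonotoneOn.ae_rightLim_eq {f : ℝ → ℝ} {a : ℝ} (hf : MonotoneOn f (Ici a))
    (μ : Measure ℝ) [NullSingletonClass μ] : ∀ᵐ x ∂μ, a ≤ x → rightLim f x = f x := by
  filter_upwards [hf.countable_not_continuousWithinAt_Ioi.ae_notMem μ] with x hx hax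
  have hcont : ContinuousWithinAt f (Ioi x) x := by
    simpa [inter_eq_right.2 (Ioi_subset_Ici hax), hax] using hx
  exact rightLim_eq_of_tendsto hcont

theorem ENNReal.ofReal_liminf_sub_div_le_liminf {u w : ℕ → ℝ} {w₀ t : ℝ}
    (hu : IsBoundedUnder (· ≥ ·) atTop u) (hw : Tendsto w atTop (𝓝 w₀)) (ht : 0 < t) :
    ENNReal.ofReal ((liminf u atTop - w₀) / t)
      ≤ liminf (fun k => ENNReal.ofReal ((u k - w k) / t)) atTop := by
  refine le_of_forall_lt_imp_le_of_dense fun c hc => ?_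
  have hc_top : c ≠ ∞ := ne_top_of_lt hc
  have hlt : c.toReal * t < liminf u atTop - w₀ :=
    (lt_div_iff₀ ht).1 ((ENNReal.lt_ofReal_iff_toReal_lt hc_top).1 hc)
  set d := liminf u atTop - w₀ - c.toReal * t
  refine le_liminf_of_le (by isBoundedDefault) ?_
  filter_upwards [eventually_lt_of_lt_liminf (show liminf u atTop - d / 2 < liminf u atTop by
    linarith) hu, hw.eventually_lt_const (show w₀ < w₀ + d / 2 by linarith)] with k hu_k hw_k
  rw [← ENNReal.ofReal_toReal hc_top]
  exact ENNReal.ofReal_le_ofReal ((le_div_iff₀ ht).2 (by linarith))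

section LiminfOfStieltjes

variable {F : ℕ → StieltjesFunction ℝ} {C : ℝ}

theorem isBoundedUnder_le_apply (hC : ∀ k l : ℕ, ∀ x, C < x → F k x = F l x) (x : ℝ) :
    IsBoundedUnder (· ≤ ·) atTop fun k => F k x :=
  isBoundedUnder_of ⟨F 0 (max x C + 1), fun k =>
    ((F k).mono (by linarith [le_max_left x C])).trans_eq
      (hC k 0 _ (by linarith [le_max_right x C]))⟩

theorem isBoundedUnder_ge_apply {y₀ : ℝ} (h0 : Tendsto (fun k => F k 0) atTop (𝓝 y₀)) {x : ℝ}
    (hx : 0 ≤ x) : IsBoundedUnder (· ≥ ·) atTop fun k => F k x :=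
  h0.isBoundedUnder_ge.mono_ge (Eventually.of_forall fun k => (F k).mono hx)

theorem monotoneOn_liminf (hC : ∀ k l : ℕ, ∀ x, C < x → F k x = F l x) {y₀ : ℝ}
    (h0 : Tendsto (fun k => F k 0) atTop (𝓝 y₀)) :
    MonotoneOn (fun x => liminf (fun k => F k x) atTop) (Ici 0) :=
  fun _ hs t _ hst => liminf_le_liminf (Eventually.of_forall fun k => (F k).mono hst)
    (isBoundedUnder_ge_apply h0 hs) (isBoundedUnder_le_apply hC t).isCoboundedUnder_ge

theorem rightLim_liminf_eq_of_lt (hC : ∀ k l : ℕ, ∀ x, C < x → F k x = F l x) {x : ℝ}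
    (hx : C < x) : rightLim (fun y => liminf (fun k => F k y) atTop) x = F 0 x := by
  refine rightLim_eq_of_tendsto ((((F 0).right_continuous x).mono Ioi_subset_Ici_self).congr'
    (eventually_nhdsWithin_of_forall fun y hy => ?_))
  dsimp only
  rw [show (fun k => F k y) = fun _ => F 0 y from funext fun k => hC k 0 y (hx.trans hy),
    liminf_const]

theorem growthIntegral_le_liminf (hC : ∀ k l : ℕ, ∀ x, C < x → F k x = F l x)
    {G : StieltjesFunction ℝ}
    (hG : ∀ x, G x = rightLim (fun y => liminf (fun k => F k y) atTop) x)
    (h0 : Tendsto (fun k => F k 0) atTop (𝓝 (G 0))) (b : ℝ) :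
    G.growthIntegral b ≤ liminf (fun k => (F k).growthIntegral b) atTop := by
  have hae : ∀ᵐ t ∂volume.restrict (Ioc 0 b), ENNReal.ofReal ((G t - G 0) / t)
      ≤ liminf (fun k => ENNReal.ofReal ((F k t - F k 0) / t)) atTop := by
    filter_upwards [ae_restrict_of_ae ((monotoneOn_liminf hC h0).ae_rightLim_eq volume),
      ae_restrict_mem measurableSet_Ioc] with t hGt ht
    rw [hG t, hGt ht.1.le]
    exact ENNReal.ofReal_liminf_sub_div_le_liminf (isBoundedUnder_ge_apply h0 ht.1.le) h0 ht.1
  calc G.growthIntegral b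
      ≤ ∫⁻ t in Ioc 0 b, liminf (fun k => ENNReal.ofReal ((F k t - F k 0) / t)) atTop :=
        lintegral_mono_ae hae
    _ ≤ _ := lintegral_liminf_le fun k =>
        ENNReal.measurable_ofReal.comp (((F k).mono.measurable.sub_const _).div measurable_id)

end LiminfOfStieltjes

theorem ENNReal.eventually_sub_lt_toReal_of_le_liminf {ι : Type*} {l : Filter ι} {I : ι → ℝ≥0∞}
    {I₀ : ℝ≥0∞} (hI : ∀ i, I i ≠ ∞) (hI₀ : I₀ ≠ ∞) (hle : I₀ ≤ liminf I l) {ε : ℝ}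
    (hε : 0 < ε) : ∀ᶠ i in l, I₀.toReal - ε < (I i).toReal := by
  rcases lt_or_ge (I₀.toReal - ε) 0 with hneg | hnonneg
  · exact Eventually.of_forall fun i => hneg.trans_le ENNReal.toReal_nonneg
  · have hlt : ENNReal.ofReal (I₀.toReal - ε) < liminf I l :=
      ((ENNReal.ofReal_lt_iff_lt_toReal hnonneg hI₀).2 (by linarith)).trans_le hle
    filter_upwards [eventually_lt_of_lt_liminf hlt] with i hi
    exact (ENNReal.ofReal_lt_iff_lt_toReal hnonneg (hI i)).1 hi

theorem limsup_exp_le_of_eventually_le {ι : Type*} {l : Filter ι} [l.NeBot] {s : ι → ℝ}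
    {s₀ : ℝ} (hs : ∀ ε > 0, ∀ᶠ i in l, s i ≤ s₀ + ε) :
    limsup (fun i => Real.exp (s i)) l ≤ Real.exp s₀ := by
  have hlim : Tendsto (fun ε => Real.exp (s₀ + ε)) (𝓝[>] 0) (𝓝 (Real.exp s₀)) := by
    simpa [Function.comp_def] using
      ((Real.continuous_exp.comp (continuous_const_add s₀)).tendsto 0).mono_left
      nhdsWithin_le_nhds
  refine ge_of_tendsto hlim ?_
  filter_upwards [self_mem_nhdsWithin] with ε hε
  exact limsup_le_of_le (isBoundedUnder_of ⟨0, fun i => (Real.exp_pos _).le⟩).isCoboundedUnder_le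
    ((hs ε hε).mono fun i hi => Real.exp_le_exp.2 hi)

theorem limsup_exp_sub_toReal_le {ι : Type*} {l : Filter ι} [l.NeBot] {a : ι → ℝ} {a₀ : ℝ}
    (ha : Tendsto a l (𝓝 a₀)) {I : ι → ℝ≥0∞} {I₀ : ℝ≥0∞} (hI : ∀ i, I i ≠ ∞) (hI₀ : I₀ ≠ ∞)
    (hle : I₀ ≤ liminf I l) :
    limsup (fun i => Real.exp (a i - (I i).toReal)) l ≤ Real.exp (a₀ - I₀.toReal) := by
  refine limsup_exp_le_of_eventually_le fun ε hε => ?_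
  filter_upwards [ha.eventually_lt_const (show a₀ < a₀ + ε / 2 by linarith),
    ENNReal.eventually_sub_lt_toReal_of_le_liminf hI hI₀ hle (half_pos hε)] with i ha_i hI_i
  linarith

theorem stmt11_general (F : ℕ → StieltjesFunction ℝ)
    -- each `F k` is a density function (increasing, right continuous, nonnegative on `[0,∞)`,
    -- eventually constant) in the determinantal class:
    (hdetk : ∀ k, IntegrableOn Real.log (Set.Ioi 0) (F k).measure)
    -- `G` is `F⁺`, the right-continuous regularization of `F(λ) = liminf_k F_k(λ)`:
    (G : StieltjesFunction ℝ)
    (hG : ∀ x : ℝ, G x = Function.rightLim (fun y => liminf (fun k => F k y) atTop) x)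
    -- `F⁺` is in the determinantal class:
    (hdetG : IntegrableOn Real.log (Set.Ioi 0) G.measure)
    -- (a) all the `F k` agree beyond some constant `C`:
    (C : ℝ) (hC : ∀ k l : ℕ, ∀ x : ℝ, C < x → F k x = F l x)
    -- (b) `lim_k F_k(0) = F⁺(0)`:
    (h0 : Tendsto (fun k => F k 0) atTop (nhds (G 0))) :
    limsup (fun k => detF (F k)) atTop ≤ detF G := by
  obtain ⟨b, hCb, hb⟩ : ∃ b, C < b ∧ 0 ≤ b :=
    ⟨max C 0 + 1, by linarith [le_max_left C 0], by linarith [le_max_right C 0]⟩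
  have hFG : ∀ k x, C < x → F k x = G x := fun k x hx => by
    rw [hG, rightLim_liminf_eq_of_lt hC hx, hC k 0 x hx]
  have htail : ∀ k,
      ∫ x in Ioi b, Real.log x ∂(F k).measure = ∫ x in Ioi b, Real.log x ∂G.measure := fun k => by
    rw [StieltjesFunction.measure_restrict_Ioi_eq fun x hx => hFG k x (hCb.trans hx)]
  simp_rw [detF_eq (hdetk _) hb, detF_eq hdetG hb, hFG _ b hCb, htail]
  refine limsup_exp_sub_toReal_le ?_
    (fun k => (F k).growthIntegral_ne_top ((hdetk k).mono_set Ioc_subset_Ioi_self))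
    (G.growthIntegral_ne_top (hdetG.mono_set Ioc_subset_Ioi_self))
    (growthIntegral_le_liminf hC hG h0 b)
  exact ((tendsto_const_nhds.sub h0).mul_const _).add_const _

theorem stmt11 (F : ℕ → StieltjesFunction ℝ)
    -- each `F k` is a density function (increasing, right continuous, nonnegative on `[0,∞)`,
    -- eventually constant) in the determinantal class:
    (hnonneg : ∀ k, ∀ x : ℝ, 0 ≤ x → 0 ≤ F k x)
    (hevconst : ∀ k, ∃ Ck : ℝ, ∀ x : ℝ, Ck < x → F k x = F k Ck)
    (hdetk : ∀ k, IntegrableOn Real.log (Set.Ioi 0) (F k).measure)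
    -- `G` is `F⁺`, the right-continuous regularization of `F(λ) = liminf_k F_k(λ)`:
    (G : StieltjesFunction ℝ)
    (hG : ∀ x : ℝ, G x = Function.rightLim (fun y => liminf (fun k => F k y) atTop) x)
    -- `F⁺` is in the determinantal class:
    (hdetG : IntegrableOn Real.log (Set.Ioi 0) G.measure)
    -- (a) all the `F k` agree beyond some constant `C`:
    (C : ℝ) (hC : ∀ k l : ℕ, ∀ x : ℝ, C < x → F k x = F l x)
    -- (b) `lim_k F_k(0) = F⁺(0)`:
    (h0 : Tendsto (fun k => F k 0) atTop (nhds (G 0))) :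
    limsup (fun k => detF (F k)) atTop ≤ detF G :=
  stmt11_general F hdetk G hG hdetG C hC h0
end
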